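/- arXiv:1504.03662 — 2 statements merged into one kernel-verified Lean document; each statement's English description precedes it below -/
import Mathlib

section
/- For every n with n = 3 or n ≥ 5, the cycle C_n satisfies ρ⊥(C_n) = 3: C_n admits a faithful orthogonal representation in ℝ^3 but none in ℝ^2. -/
/-- A faithful orthogonal representation (FOR) of the graph `G` in dimension `d`:
an injective map assigning a nonzero vector of `ℝ^d` to each vertex, such that
distinct vertices are adjacent iff their vectors are orthogonal. -/
def IsFOR {V : Type*} (G : SimpleGraph V) (d : ℕ)
    (σ : V → EuclideanSpace ℝ (Fin d)) : Prop :=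
  Function.Injective σ ∧ (∀ v, σ v ≠ 0) ∧
    ∀ i j : V, i ≠ j → (G.Adj i j ↔ inner ℝ (σ i) (σ j) = (0 : ℝ))

/-- `G` has a faithful orthogonal representation in dimension `d`. -/
def HasFOR {V : Type*} (G : SimpleGraph V) (d : ℕ) : Prop :=
  ∃ σ : V → EuclideanSpace ℝ (Fin d), IsFOR G d σ

/-- The faithful orthogonal rank `ρ⊥(G)`: the minimum dimension admitting a FOR. -/
noncomputable def forRank {V : Type*} (G : SimpleGraph V) : ℕ :=
  sInf {d | HasFOR G d}


/-!
In dimension at most two the vectors orthogonal to a nonzero vector form a line, so along a path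
`a ⊥ b ⊥ c ⊥ d` of nonzero vectors `a` is parallel to `c` and hence `a ⊥ d`. Along `C_3` this makes
a vertex orthogonal to itself; along `C_n` with `n ≥ 5` it makes the non-adjacent vertices `0` and
`3` orthogonal.

In `ℝ³`, vertex `k ≥ 1` goes to `(cos 2k, sin 2k, √(-cos 2))`, so that the inner product of
vertices `i, j ≥ 1` is `cos (2(i - j)) - cos 2`; as `π` is irrational, this vanishes exactly when
`i - j = ±1`. Vertex `0` goes to angle `n`, midway between vertices `1` and `n - 1`, at the height
making its inner product with vertex `j` equal to `cos (n - 2j) - cos (n - 2)`. It coincides with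
vertex `2` exactly when `n = 4`.
-/

open Real SimpleGraph Module
open scoped RealInnerProductSpace

theorem inner_eq_zero_of_orthogonal_chain {E : Type*} [NormedAddCommGroup E]
    [InnerProductSpace ℝ E] [FiniteDimensional ℝ E] (hE : finrank ℝ E ≤ 2) {a b c d : E}
    (hb : b ≠ 0) (hc : c ≠ 0) (hab : ⟪a, b⟫ = 0) (hcb : ⟪c, b⟫ = 0) (hcd : ⟪c, d⟫ = 0) :
    ⟪a, d⟫ = 0 := by
  have hK : finrank ℝ (ℝ ∙ b)ᗮ ≤ 1 := by
    have := (ℝ ∙ b).finrank_add_finrank_orthogonal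
    rw [finrank_span_singleton hb] at this
    omega
  obtain ⟨e, he⟩ := finrank_le_one_iff.1 hK
  obtain ⟨α, rfl⟩ : ∃ α : ℝ, α • (e : E) = a := by
    obtain ⟨α, hα⟩ := he ⟨a, Submodule.mem_orthogonal_singleton_iff_inner_left.2 hab⟩
    exact ⟨α, congrArg Subtype.val hα⟩
  obtain ⟨γ, rfl⟩ : ∃ γ : ℝ, γ • (e : E) = c := by
    obtain ⟨γ, hγ⟩ := he ⟨c, Submodule.mem_orthogonal_singleton_iff_inner_left.2 hcb⟩
    exact ⟨γ, congrArg Subtype.val hγ⟩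
  have hγ : γ ≠ 0 := by rintro rfl; simp at hc
  rw [real_inner_smul_left] at hcd ⊢
  rw [(mul_eq_zero.1 hcd).resolve_left hγ, mul_zero]

theorem SimpleGraph.cycleGraph_adj_iff_val {n : ℕ} (hn : 2 ≤ n) {u v : Fin n} :
    (cycleGraph n).Adj u v ↔ u.val + 1 = v.val ∨ v.val + 1 = u.val ∨
      (u.val + 1 = n ∧ v.val = 0) ∨ (v.val + 1 = n ∧ u.val = 0) := by
  have hsub (a b : Fin n) :
      (a - b).val = 1 ↔ b.val + 1 = a.val ∨ (a.val = 0 ∧ b.val + 1 = n) := by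
    rcases le_or_gt b a with h | h
    · rw [Fin.coe_sub_iff_le.2 h]; omega
    · rw [Fin.coe_sub_iff_lt.2 h]; omega
  rw [cycleGraph_adj', hsub, hsub]
  omega

theorem IsFOR.inner_eq_zero_of_adj {V : Type*} {G : SimpleGraph V} {d : ℕ}
    {σ : V → EuclideanSpace ℝ (Fin d)} (hσ : IsFOR G d σ) {u v : V} (h : G.Adj u v) :
    ⟪σ u, σ v⟫ = 0 :=
  (hσ.2.2 u v h.ne).1 h

theorem not_hasFOR_cycleGraph_of_le_two {n d : ℕ} (hn : n = 3 ∨ 5 ≤ n) (hd : d ≤ 2) :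
    ¬ HasFOR (cycleGraph n) d := by
  rintro ⟨σ, hσ⟩
  have hE : finrank ℝ (EuclideanSpace ℝ (Fin d)) ≤ 2 := by rwa [finrank_euclideanSpace_fin]
  have hn2 : 2 ≤ n := by omega
  have orth {i j : ℕ} (hi : i < n) (hj : j < n) (h : i + 1 = j ∨ j + 1 = i ∨ (i + 1 = n ∧ j = 0)) :
      ⟪σ ⟨i, hi⟩, σ ⟨j, hj⟩⟫ = 0 :=
    hσ.inner_eq_zero_of_adj ((cycleGraph_adj_iff_val hn2).2 (by dsimp only; omega))
  have chain {k : ℕ} (hk : k < n) (h : k = 3 ∨ (n = 3 ∧ k = 0)) :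
      ⟪σ ⟨0, by omega⟩, σ ⟨k, hk⟩⟫ = 0 :=
    inner_eq_zero_of_orthogonal_chain hE (b := σ ⟨1, by omega⟩) (c := σ ⟨2, by omega⟩)
      (hσ.2.1 _) (hσ.2.1 _) (orth _ _ (by omega)) (orth _ _ (by omega)) (orth _ _ (by omega))
  rcases hn with rfl | h5
  · exact hσ.2.1 _ (inner_self_eq_zero.1 (chain (k := 0) (by omega) (by omega)))
  · have h03 := chain (k := 3) (by omega) (by omega)
    have := (cycleGraph_adj_iff_val hn2).1 ((hσ.2.2 _ _ (by simp)).2 h03)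
    dsimp only at this; omega

theorem Real.cos_intCast_eq_cos_intCast_iff {a b : ℤ} :
    cos a = cos b ↔ a = b ∨ a = -b := by
  have two_mul_pi {k m : ℤ} (h : ((2 * k : ℤ) : ℝ) * π = m) : k = 0 := by
    by_contra hk
    exact (irrational_pi.intCast_mul (by omega)).ne_int m h
  constructor
  · intro h
    obtain ⟨k, hk | hk⟩ := cos_eq_cos_iff.1 h
    · obtain rfl := two_mul_pi (k := k) (m := b - a) (by push_cast; linarith)
      have : (b : ℝ) = a := by simpa using hk
      left; exact_mod_cast this.symm
    · obtain rfl := two_mul_pi (k := k) (m := b + a) (by push_cast; linarith)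
      have : (b : ℝ) = -a := by simpa using hk
      right; exact_mod_cast (by linarith : (a : ℝ) = -b)
  · rintro (rfl | rfl)
    · rfl
    · rw [Int.cast_neg, cos_neg]

noncomputable def cylinderPoint (θ z : ℝ) : EuclideanSpace ℝ (Fin 3) := !₂[cos θ, sin θ, z]

theorem inner_cylinderPoint (θ z θ' z' : ℝ) :
    ⟪cylinderPoint θ z, cylinderPoint θ' z'⟫ = cos (θ - θ') + z * z' := by
  simp only [cylinderPoint, PiLp.inner_apply, RCLike.inner_apply, ringHom_apply,
    Fin.sum_univ_three, Fin.isValue, Matrix.cons_val_zero, Matrix.cons_val_one, Matrix.cons_val,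
    cos_sub]
  ring

theorem cylinderPoint_ne_zero (θ z : ℝ) : cylinderPoint θ z ≠ 0 := by
  intro h
  have := inner_cylinderPoint θ z θ z
  rw [h, inner_zero_left, sub_self, cos_zero] at this
  nlinarith

theorem cos_sub_eq_one_of_cylinderPoint_eq {θ z θ' z' : ℝ}
    (h : cylinderPoint θ z = cylinderPoint θ' z') : cos (θ - θ') = 1 ∧ z = z' := by
  have hz : z = z' := by simpa [cylinderPoint] using congrArg (· 2) h
  refine ⟨?_, hz⟩
  have := inner_cylinderPoint θ z θ' z'
  rw [← h, inner_cylinderPoint, sub_self, cos_zero, hz] at this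
  linarith

namespace CycleGraphFOR

variable {n : ℕ}

def angle (k : Fin n) : ℤ := if k.val = 0 then n else 2 * k.val

noncomputable def height (k : Fin n) : ℝ :=
  if k.val = 0 then -cos ((n - 2 : ℤ) : ℝ) / √(-cos 2) else √(-cos 2)

noncomputable def rep (k : Fin n) : EuclideanSpace ℝ (Fin 3) :=
  cylinderPoint (angle k) (height k)

theorem inner_rep (i j : Fin n) :
    ⟪rep i, rep j⟫ = cos ((angle i - angle j : ℤ) : ℝ) + height i * height j := by
  rw [rep, rep, inner_cylinderPoint, Int.cast_sub]

theorem height_mul_height_of_ne_zero {i j : Fin n} (hi : i.val ≠ 0) (hj : j.val ≠ 0) :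
    height i * height j = -cos ((2 : ℤ) : ℝ) := by
  rw [height, height, if_neg hi, if_neg hj, Real.mul_self_sqrt (by linarith [cos_two_neg])]
  norm_num

theorem height_mul_height_of_eq_zero {i j : Fin n} (hi : i.val = 0) (hj : j.val ≠ 0) :
    height i * height j = -cos ((n - 2 : ℤ) : ℝ) := by
  rw [height, height, if_pos hi, if_neg hj]
  exact div_mul_cancel₀ _ (Real.sqrt_pos.2 (by linarith [cos_two_neg])).ne'

theorem adj_iff_inner_rep_eq_zero (hn : 3 ≤ n) {i j : Fin n} (hij : i ≠ j) (hj : j.val ≠ 0) :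
    (cycleGraph n).Adj i j ↔ ⟪rep i, rep j⟫ = 0 := by
  have := i.isLt
  have := j.isLt
  have hij' : i.val ≠ j.val := Fin.val_ne_of_ne hij
  rw [inner_rep, cycleGraph_adj_iff_val (by omega), ← sub_neg_eq_add, sub_eq_zero]
  by_cases hi : i.val = 0
  · rw [height_mul_height_of_eq_zero hi hj, neg_neg, cos_intCast_eq_cos_intCast_iff]
    simp only [angle, if_pos hi, if_neg hj]
    omega
  · rw [height_mul_height_of_ne_zero hi hj, neg_neg, cos_intCast_eq_cos_intCast_iff]
    simp only [angle, if_neg hi, if_neg hj]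
    omega

theorem height_ne_of_eq_zero (hn : n ≠ 4) {i j : Fin n} (hi : i.val = 0) (hj : j.val ≠ 0) :
    height i ≠ height j := by
  intro h
  have hcos := height_mul_height_of_eq_zero hi hj
  rw [h, height_mul_height_of_ne_zero hj hj, neg_inj] at hcos
  have := cos_intCast_eq_cos_intCast_iff.1 hcos.symm
  omega

theorem rep_injective (hn : n ≠ 4) : Function.Injective (rep (n := n)) := by
  intro i j hij
  obtain ⟨hcos, hz⟩ := cos_sub_eq_one_of_cylinderPoint_eq hij
  have hangle : angle i = angle j := by
    have := cos_intCast_eq_cos_intCast_iff (a := angle i - angle j) (b := 0).1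
      (by push_cast; simpa using hcos)
    omega
  by_cases hi : i.val = 0 <;> by_cases hj : j.val = 0
  · exact Fin.ext (by omega)
  · exact absurd hz (height_ne_of_eq_zero hn hi hj)
  · exact absurd hz.symm (height_ne_of_eq_zero hn hj hi)
  · simp only [angle, if_neg hi, if_neg hj] at hangle
    exact Fin.ext (by omega)

theorem isFOR_rep (hn3 : 3 ≤ n) (hn4 : n ≠ 4) : IsFOR (cycleGraph n) 3 rep := by
  refine ⟨rep_injective hn4, fun k => cylinderPoint_ne_zero _ _, fun i j hij => ?_⟩
  by_cases hj : j.val = 0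
  · rw [SimpleGraph.adj_comm, real_inner_comm]
    exact adj_iff_inner_rep_eq_zero hn3 hij.symm (fun hi => hij (Fin.ext (hi.trans hj.symm)))
  · exact adj_iff_inner_rep_eq_zero hn3 hij hj

end CycleGraphFOR

theorem forRank_eq_of_hasFOR {V : Type*} {G : SimpleGraph V} {d : ℕ} (h : HasFOR G d)
    (hlt : ∀ e < d, ¬ HasFOR G e) : forRank G = d :=
  IsLeast.csInf_eq ⟨h, fun e he => not_lt.1 fun hed => hlt e hed he⟩

theorem hasFOR_cycleGraph_three {n : ℕ} (hn3 : 3 ≤ n) (hn4 : n ≠ 4) :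
    HasFOR (cycleGraph n) 3 :=
  ⟨_, CycleGraphFOR.isFOR_rep hn3 hn4⟩

/-- For `n = 3` or `n ≥ 5`, `ρ⊥(C_n) = 3`: `C_n` has a FOR in `ℝ^3` but none in `ℝ^2`. -/
theorem stmt_5 (n : ℕ) (hn : n = 3 ∨ 5 ≤ n) :
    HasFOR (SimpleGraph.cycleGraph n) 3 ∧ ¬ HasFOR (SimpleGraph.cycleGraph n) 2 ∧
      forRank (SimpleGraph.cycleGraph n) = 3 := by
  have h3 := hasFOR_cycleGraph_three (by omega) (by omega : n ≠ 4)
  have hlow (d : ℕ) (hd : d < 3) := not_hasFOR_cycleGraph_of_le_two hn (Nat.le_of_lt_succ hd)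
  exact ⟨h3, hlow 2 (by norm_num), forRank_eq_of_hasFOR h3 hlow⟩
end

section
/- Let G be a finite simple graph whose vertex set is partitioned into two nonempty sets A and B such that every vertex of A is adjacent in G to every vertex of B (i.e., G is the join of the induced subgraphs G[A] and G[B]). Then ρ⊥(G[A]) + ρ⊥(G[B]) ≤ ρ⊥(G). -/
/-! Take a FOR `σ` of `G` in dimension `ρ⊥(G)`. Restricted to `A`, the vectors `σ '' A` form a
FOR of `G[A]` inside their span, whose dimension therefore bounds `ρ⊥(G[A])`; likewise for `B`.
Since every vertex of `A` is adjacent to every vertex of `B`, the two spans are orthogonal, hence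
independent, so their dimensions add up to at most `ρ⊥(G)`. -/

open Module Submodule

section

variable {V : Type*} (G : SimpleGraph V)

theorem hasFOR_finrank {E : Type*} [NormedAddCommGroup E] [InnerProductSpace ℝ E]
    [FiniteDimensional ℝ E] (σ : V → E) (hinj : Function.Injective σ) (hne : ∀ v, σ v ≠ 0)
    (hadj : ∀ i j, i ≠ j → (G.Adj i j ↔ inner ℝ (σ i) (σ j) = (0 : ℝ))) :
    HasFOR G (finrank ℝ E) := by
  let e := (stdOrthonormalBasis ℝ E).repr
  refine ⟨e ∘ σ, e.injective.comp hinj, fun v => e.map_ne_zero_iff.2 (hne v), fun i j hij => ?_⟩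
  rw [Function.comp_apply, Function.comp_apply, e.inner_map_map]
  exact hadj i j hij

/-- The vector of vertex `i` is the indicator of `inl i` together with all pairs `s` through
`i` that are not edges, so two distinct vertices share a coordinate exactly when they are
not adjacent. -/
theorem exists_hasFOR [Finite V] : ∃ d, HasFOR G d := by
  classical
  have := Fintype.ofFinite V
  let S (i : V) : V ⊕ Sym2 V → Prop := Sum.elim (· = i) (fun s => i ∈ s ∧ s ∉ G.edgeSet)
  let σ (i : V) : EuclideanSpace ℝ (V ⊕ Sym2 V) := WithLp.toLp 2 fun x => if S i x then 1 else 0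
  have hσ_inl (i k : V) : σ i (.inl k) = if k = i then 1 else 0 := rfl
  refine ⟨_, hasFOR_finrank G σ (fun i j hij => ?_) (fun i hi => ?_) (fun i j hij => ?_)⟩
  · simpa [hσ_inl, eq_comm] using congrArg (· (.inl i)) hij
  · simpa [hσ_inl] using congrArg (· (.inl i)) hi
  · have hS : ∀ x, x ≠ .inr s(i, j) → ¬ (S i x ∧ S j x) := by
      rintro (k | s) hs ⟨hi, hj⟩
      · exact hij (hi.symm.trans hj)
      · exact hs (congrArg _ ((Sym2.mem_and_mem_iff hij).1 ⟨hi.1, hj.1⟩))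
    have hinner : inner ℝ (σ i) (σ j) = if G.Adj i j then (0 : ℝ) else 1 := by
      rw [PiLp.inner_apply, Finset.sum_eq_single (.inr s(i, j))]
      · simp [σ, S, SimpleGraph.mem_edgeSet]
      · rintro x - hx
        have := hS x hx
        simp only [σ, RCLike.inner_apply, conj_trivial, mul_ite, mul_one, mul_zero]
        split_ifs <;> simp_all
      · simp
    simp [hinner]

theorem forRank_le {d : ℕ} (h : HasFOR G d) : forRank G ≤ d :=
  Nat.sInf_le h

theorem hasFOR_forRank [Finite V] : HasFOR G (forRank G) :=
  Nat.sInf_mem (exists_hasFOR G)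

end

theorem IsFOR.hasFOR_induce {V : Type*} {G : SimpleGraph V} {d : ℕ}
    {σ : V → EuclideanSpace ℝ (Fin d)} (hσ : IsFOR G d σ) (A : Set V) : HasFOR (G.induce A) (finrank ℝ (span ℝ (σ '' A))) := by
  obtain ⟨hinj, hne, hadj⟩ := hσ
  refine hasFOR_finrank _ (fun a => ⟨σ a, subset_span ⟨a, a.2, rfl⟩⟩)
    (fun a b h => Subtype.val_injective (hinj (congrArg Subtype.val h)))
    (fun a h => hne a (congrArg Subtype.val h)) (fun a b hab => ?_)
  rw [coe_inner]
  exact hadj a b (Subtype.val_injective.ne hab)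

theorem stmt_13_general {V : Type*} [Fintype V] (G : SimpleGraph V) (A B : Set V)
    (hdisj : Disjoint A B)
    (hjoin : ∀ a ∈ A, ∀ b ∈ B, G.Adj a b) :
    forRank (G.induce A) + forRank (G.induce B) ≤ forRank G := by
  obtain ⟨σ, hσ⟩ := hasFOR_forRank G
  have horth : span ℝ (σ '' A) ⟂ span ℝ (σ '' B) := by
    rw [isOrtho_span]
    rintro - ⟨a, ha, rfl⟩ - ⟨b, hb, rfl⟩
    exact (hσ.2.2 a b (hdisj.ne_of_mem ha hb)).1 (hjoin a ha b hb)
  calc forRank (G.induce A) + forRank (G.induce B)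
      ≤ finrank ℝ (span ℝ (σ '' A)) + finrank ℝ (span ℝ (σ '' B)) :=
        add_le_add (forRank_le _ (hσ.hasFOR_induce A)) (forRank_le _ (hσ.hasFOR_induce B))
    _ ≤ finrank ℝ (EuclideanSpace ℝ (Fin (forRank G))) :=
        finrank_add_finrank_le_of_disjoint horth.disjoint
    _ = forRank G := finrank_euclideanSpace_fin

/-- If the vertex set of `G` is partitioned into nonempty sets `A` and `B` with every
vertex of `A` adjacent to every vertex of `B` (so `G` is the join of `G[A]` and `G[B]`),
then `ρ⊥(G[A]) + ρ⊥(G[B]) ≤ ρ⊥(G)`. -/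
theorem stmt_13 {V : Type*} [Fintype V] (G : SimpleGraph V) (A B : Set V)
    (hA : A.Nonempty) (hB : B.Nonempty) (hdisj : Disjoint A B)
    (hcover : A ∪ B = Set.univ)
    (hjoin : ∀ a ∈ A, ∀ b ∈ B, G.Adj a b) :
    forRank (G.induce A) + forRank (G.induce B) ≤ forRank G :=
  stmt_13_general G A B hdisj hjoin
end
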